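/- For every γ > 0 there exists a constant C = C(n, γ) > 0 such that for all u > 0 and all x ∈ ℝⁿ, |∂_u^γ p_u(x)| ≤ C · (u + |x|)^{−n−γ}. -/

import Mathlib

/-!
By homogeneity, `∂ₜᵐ [t (t² + r²)^(-a)] = r^(1-2a-m) G⁽ᵐ⁾(t / r)` for `G s = s (1 + s²)^(-a)`,
and `G⁽ᵐ⁾(s) = (1 + s²)^(-a-m) Qₘ(s)` with `deg Qₘ ≤ m + 1`; hence
`|∂ₜᵐ p_t(x)| ≲ (t + |x|)^(-n-m)` (for `x = 0` the kernel is a pure power of `t`).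
Inserting this into the integral defining `∂ᵤ^γ p_u(x)`, with `m - γ ∈ (0, 1]`, leaves
`∫₀^∞ (A + s)^(-n-m) s^(m-γ-1) ds = A^(-n-γ) B(m - γ, n + γ)` where `A = u + |x|`.
-/

open MeasureTheory Set
open scoped ENNReal

/-- The Poisson kernel of the upper half-space `ℝ^{n+1}_+`:
`p_t(x) = Γ((n+1)/2) π^{−(n+1)/2} t (t² + |x|²)^{−(n+1)/2}`. -/
noncomputable def poissonKernelHS (n : ℕ) (t : ℝ) (x : EuclideanSpace ℝ (Fin n)) : ℝ :=
  Real.Gamma (((n : ℝ) + 1) / 2) / Real.pi ^ (((n : ℝ) + 1) / 2) *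
    (t * (t ^ 2 + ‖x‖ ^ 2) ^ (-(((n : ℝ) + 1) / 2)))

/-- The smallest integer strictly greater than `α` (for `α ≥ 0`). -/
noncomputable def mOf (α : ℝ) : ℕ := ⌊α⌋₊ + 1

/-- The fractional derivative in `t` of the Poisson kernel, of order `α > 0`, with `m` the
smallest integer strictly exceeding `α`:
`∂_t^α p_t(x) = (e^{−iπ(m−α)}/Γ(m−α)) ∫₀^∞ ∂_t^m p_{t+s}(x) s^{m−α−1} ds`. -/
noncomputable def fracKernel (n : ℕ) (α : ℝ) (t : ℝ) (x : EuclideanSpace ℝ (Fin n)) : ℂ :=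
  Complex.exp ((↑(-(Real.pi * ((mOf α : ℝ) - α))) : ℂ) * Complex.I) /
      (Real.Gamma ((mOf α : ℝ) - α) : ℂ) *
    ((∫ s in Ioi (0 : ℝ),
        iteratedDeriv (mOf α) (fun r => poissonKernelHS n r x) (t + s) *
          s ^ ((mOf α : ℝ) - α - 1) : ℝ) : ℂ)

/-- `∂_t^α P_t f(x) = ∫_{ℝⁿ} ∂_t^α p_t(x−y) f(y) dy` for a `B`-valued `f`. -/
noncomputable def fracPoisson (n : ℕ) {B : Type*} [NormedAddCommGroup B] [NormedSpace ℂ B]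
    (α t : ℝ) (f : EuclideanSpace ℝ (Fin n) → B) (x : EuclideanSpace ℝ (Fin n)) : B :=
  ∫ y, fracKernel n α t (x - y) • f y

/-- The fractional Littlewood–Paley `g`-function
`g_α^q(f)(x) = (∫₀^∞ ‖t^α ∂_t^α P_t f(x)‖_B^q dt/t)^{1/q}`, with values in `[0,∞]`. -/
noncomputable def gFun (n : ℕ) {B : Type*} [NormedAddCommGroup B] [NormedSpace ℂ B]
    (q α : ℝ) (f : EuclideanSpace ℝ (Fin n) → B) (x : EuclideanSpace ℝ (Fin n)) : ℝ≥0∞ :=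
  (∫⁻ t in Ioi (0 : ℝ),
      ENNReal.ofReal (‖t ^ α • fracPoisson n α t f x‖ ^ q / t)) ^ (1 / q)

/-- The fractional area function
`S_α^q(f)(x) = (∬_{|x−y|<t} ‖t^α ∂_t^α P_t f(y)‖_B^q dy dt/t^{n+1})^{1/q}`,
with values in `[0,∞]`. -/
noncomputable def areaFun (n : ℕ) {B : Type*} [NormedAddCommGroup B] [NormedSpace ℂ B]
    (q α : ℝ) (f : EuclideanSpace ℝ (Fin n) → B) (x : EuclideanSpace ℝ (Fin n)) : ℝ≥0∞ :=
  (∫⁻ t in Ioi (0 : ℝ), ∫⁻ y in {y | ‖x - y‖ < t},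
      ENNReal.ofReal (‖t ^ α • fracPoisson n α t f y‖ ^ q / t ^ (n + 1))) ^ (1 / q)

/-- The fractional `g*_λ`-function
`g_{λ,α}^{q,*}(f)(x) = (∬_{ℝⁿ×(0,∞)} (t/(t+|x−y|))^{λn} ‖t^α ∂_t^α P_t f(y)‖_B^q
dy dt/t^{n+1})^{1/q}`, with values in `[0,∞]`. -/
noncomputable def gStarFun (n : ℕ) {B : Type*} [NormedAddCommGroup B] [NormedSpace ℂ B]
    (q α lam : ℝ) (f : EuclideanSpace ℝ (Fin n) → B) (x : EuclideanSpace ℝ (Fin n)) : ℝ≥0∞ :=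
  (∫⁻ t in Ioi (0 : ℝ), ∫⁻ y,
      ENNReal.ofReal ((t / (t + ‖x - y‖)) ^ (lam * n) *
        ‖t ^ α • fracPoisson n α t f y‖ ^ q / t ^ (n + 1))) ^ (1 / q)

open Polynomial Filter Topology

namespace PoissonKernel

/-- `d^m/ds^m [s (1 + s²)^(-a)] = (1 + s²)^(-a-m) · (profileNum a m).eval s`. -/
noncomputable def profileNum (a : ℝ) : ℕ → ℝ[X]
  | 0 => X
  | m + 1 => (X ^ 2 + 1) * derivative (profileNum a m) - C (2 * a + 2 * m) * X * profileNum a m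

noncomputable def profileDeriv (a : ℝ) (m : ℕ) (s : ℝ) : ℝ :=
  (1 + s ^ 2) ^ (-a - m) * (profileNum a m).eval s

lemma natDegree_profileNum_le (a : ℝ) (m : ℕ) : (profileNum a m).natDegree ≤ m + 1 := by
  induction m with
  | zero => simp [profileNum]
  | succ m ih =>
    have h₁ : ((X ^ 2 + 1 : ℝ[X]) * derivative (profileNum a m)).natDegree ≤ 2 + m :=
      natDegree_mul_le_of_le (natDegree_add_le_of_degree_le (by simp) (by simp))
        ((natDegree_derivative_le _).trans (by omega))
    have h₂ : (C (2 * a + 2 * m) * X * profileNum a m).natDegree ≤ 1 + (m + 1) :=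
      natDegree_mul_le_of_le ((natDegree_C_mul_le _ _).trans natDegree_X_le) ih
    exact (natDegree_sub_le _ _).trans (max_le (by omega) (by omega))

lemma hasDerivAt_profileDeriv (a : ℝ) (m : ℕ) (s : ℝ) :
    HasDerivAt (profileDeriv a m) (profileDeriv a (m + 1) s) s := by
  have hpos : (0 : ℝ) < 1 + s ^ 2 := by positivity
  have hw : HasDerivAt (fun s : ℝ => (1 + s ^ 2) ^ (-a - m))
      (2 * s * (-a - m) * (1 + s ^ 2) ^ (-a - m - 1)) s := by
    convert ((hasDerivAt_pow 2 s).const_add 1).rpow_const (p := -a - m) (Or.inl hpos.ne')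
      using 1
    ring
  refine (hw.mul ((profileNum a m).hasDerivAt s)).congr_deriv ?_
  have hsplit : (1 + s ^ 2) ^ (-a - m) = (1 + s ^ 2) ^ (-a - m - 1) * (1 + s ^ 2) := by
    rw [← Real.rpow_add_one hpos.ne', sub_add_cancel]
  simp only [profileDeriv, profileNum, eval_sub, eval_mul, eval_add, eval_pow, eval_X, eval_C,
    eval_one, hsplit, Nat.cast_succ, show -a - (m + 1 : ℝ) = -a - m - 1 by ring]
  ring

lemma iteratedDeriv_profile (a : ℝ) (m : ℕ) :
    iteratedDeriv m (fun s : ℝ => s * (1 + s ^ 2) ^ (-a)) = profileDeriv a m := by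
  induction m with
  | zero => ext s; simp [profileDeriv, profileNum, mul_comm]
  | succ m ih => ext s; rw [iteratedDeriv_succ, ih, (hasDerivAt_profileDeriv a m s).deriv]

lemma abs_eval_le_of_natDegree_le (p : ℝ[X]) {d : ℕ} (hd : p.natDegree ≤ d) {s : ℝ}
    (hs : 0 ≤ s) : |p.eval s| ≤ (∑ i ∈ Finset.range (d + 1), |p.coeff i|) * (1 + s) ^ d := by
  rw [eval_eq_sum_range' (Nat.lt_succ_of_le hd), Finset.sum_mul]
  refine (Finset.abs_sum_le_sum_abs _ _).trans (Finset.sum_le_sum fun i hi => ?_)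
  rw [abs_mul, abs_pow, abs_of_nonneg hs]
  gcongr
  calc s ^ i ≤ (1 + s) ^ i := by gcongr; linarith
    _ ≤ (1 + s) ^ d :=
      pow_le_pow_right₀ (by linarith) (Nat.lt_succ_iff.mp (Finset.mem_range.mp hi))

lemma exists_abs_profileDeriv_le {a : ℝ} (ha : 0 ≤ a) (m : ℕ) :
    ∃ K, 0 ≤ K ∧ ∀ s, 0 ≤ s → |profileDeriv a m s| ≤ K * (1 + s) ^ (1 - 2 * a - m) := by
  set K := ∑ i ∈ Finset.range (m + 2), |(profileNum a m).coeff i|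
  refine ⟨2 ^ (a + m) * K, by positivity, fun s hs => ?_⟩
  have h1s : 0 < 1 + s := by linarith
  -- `(1 + s)² ≤ 2 (1 + s²)` and the exponent `-a - m` is nonpositive
  have hweight : (1 + s ^ 2) ^ (-a - m) ≤ 2 ^ (a + m) * (1 + s) ^ (-2 * a - 2 * m) := by
    calc (1 + s ^ 2) ^ (-a - m) ≤ ((1 + s) ^ 2 / 2) ^ (-a - m) :=
          Real.rpow_le_rpow_of_nonpos (by positivity) (by nlinarith [sq_nonneg (1 - s)])
            (by have := m.cast_nonneg (α := ℝ); linarith)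
      _ = 2 ^ (a + m) * (1 + s) ^ (-2 * a - 2 * m) := by
          rw [Real.div_rpow (by positivity) zero_le_two, ← Real.rpow_natCast, ← Real.rpow_mul
            h1s.le, div_eq_mul_inv, ← Real.rpow_neg zero_le_two]
          ring_nf
  have hnum : |(profileNum a m).eval s| ≤ K * (1 + s) ^ ((m + 1 : ℕ) : ℝ) := by
    rw [Real.rpow_natCast]
    exact abs_eval_le_of_natDegree_le _ (natDegree_profileNum_le a m) hs
  calc |profileDeriv a m s|
      = (1 + s ^ 2) ^ (-a - m) * |(profileNum a m).eval s| := by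
        rw [profileDeriv, abs_mul, abs_of_nonneg (by positivity)]
    _ ≤ 2 ^ (a + m) * (1 + s) ^ (-2 * a - 2 * m) * (K * (1 + s) ^ ((m + 1 : ℕ) : ℝ)) := by
        gcongr
    _ = 2 ^ (a + m) * K * (1 + s) ^ (1 - 2 * a - m) := by
        rw [mul_mul_mul_comm, ← Real.rpow_add h1s]
        push_cast
        ring_nf

lemma iteratedDeriv_rpow_kernel_of_pos (a : ℝ) {r : ℝ} (hr : 0 < r) (m : ℕ) (t : ℝ) :
    iteratedDeriv m (fun t : ℝ => t * (t ^ 2 + r ^ 2) ^ (-a)) t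
      = r ^ (1 - 2 * a - m) * profileDeriv a m (t / r) := by
  have hsmooth : ContDiff ℝ m (fun s : ℝ => s * (1 + s ^ 2) ^ (-a)) :=
    contDiff_id.mul ((contDiff_const.add (contDiff_id.pow 2)).rpow_const_of_ne
      fun s => by positivity)
  have hscale : (fun t : ℝ => t * (t ^ 2 + r ^ 2) ^ (-a))
      = fun t => r ^ (1 - 2 * a) * ((r⁻¹ * t) * (1 + (r⁻¹ * t) ^ 2) ^ (-a)) := by
    ext t
    have hsum : t ^ 2 + r ^ 2 = r ^ 2 * (1 + (r⁻¹ * t) ^ 2) := by field_simp; ring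
    rw [hsum, Real.mul_rpow (by positivity) (by positivity), ← Real.rpow_natCast,
      ← Real.rpow_mul hr.le, sub_eq_add_neg, Real.rpow_add hr, Real.rpow_one]
    field_simp
    ring_nf
  rw [hscale, iteratedDeriv_const_mul_field,
    iteratedDeriv_comp_const_mul hsmooth, iteratedDeriv_profile, ← Real.rpow_natCast,
    Real.inv_rpow hr.le, ← Real.rpow_neg hr.le, ← mul_assoc, ← Real.rpow_add hr, inv_mul_eq_div]
  ring_nf

lemma iteratedDeriv_rpow_kernel_zero (a : ℝ) (m : ℕ) {t : ℝ} (ht : 0 < t) :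
    iteratedDeriv m (fun t : ℝ => t * (t ^ 2) ^ (-a)) t
      = (descPochhammer ℝ m).eval (1 - 2 * a) * t ^ (1 - 2 * a - m) := by
  have hpow : (fun t : ℝ => t * (t ^ 2) ^ (-a)) =ᶠ[𝓝 t] fun t => t ^ (1 - 2 * a) := by
    filter_upwards [Ioi_mem_nhds ht] with s (hs : 0 < s)
    rw [← Real.rpow_natCast, ← Real.rpow_mul hs.le, sub_eq_add_neg, Real.rpow_add hs,
      Real.rpow_one]
    ring_nf
  rw [hpow.iteratedDeriv_eq, iteratedDeriv_eq_iterate, Real.iter_deriv_rpow_const]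

lemma exists_abs_iteratedDeriv_rpow_kernel_le {a : ℝ} (ha : 0 ≤ a) (m : ℕ) :
    ∃ C, 0 < C ∧ ∀ r, 0 ≤ r → ∀ t, 0 < t →
      |iteratedDeriv m (fun t : ℝ => t * (t ^ 2 + r ^ 2) ^ (-a)) t|
        ≤ C * (t + r) ^ (1 - 2 * a - m) := by
  obtain ⟨K, hK, hprofile⟩ := exists_abs_profileDeriv_le ha m
  set D := |(descPochhammer ℝ m).eval (1 - 2 * a)|
  have hD : 0 ≤ D := abs_nonneg _
  refine ⟨K + D + 1, by positivity, fun r hr t ht => ?_⟩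
  rcases hr.eq_or_lt with rfl | hr
  · simpa [iteratedDeriv_rpow_kernel_zero a m ht, abs_mul,
      abs_of_pos (Real.rpow_pos_of_pos ht _)] using
      mul_le_mul_of_nonneg_right (by linarith : D ≤ K + D + 1)
        (Real.rpow_pos_of_pos ht (1 - 2 * a - m)).le
  · rw [iteratedDeriv_rpow_kernel_of_pos a hr, abs_mul, abs_of_pos (Real.rpow_pos_of_pos hr _)]
    calc r ^ (1 - 2 * a - m) * |profileDeriv a m (t / r)|
        ≤ r ^ (1 - 2 * a - m) * (K * (1 + t / r) ^ (1 - 2 * a - m)) := by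
          gcongr
          exact hprofile _ (by positivity)
      _ = K * (t + r) ^ (1 - 2 * a - m) := by
          rw [mul_left_comm, ← Real.mul_rpow hr.le (by positivity), mul_one_add,
            mul_div_cancel₀ _ hr.ne', add_comm r]
      _ ≤ (K + D + 1) * (t + r) ^ (1 - 2 * a - m) := by gcongr; linarith

lemma exists_abs_iteratedDeriv_poissonKernelHS_le (n m : ℕ) :
    ∃ C, 0 < C ∧ ∀ (x : EuclideanSpace ℝ (Fin n)) (t : ℝ), 0 < t →
      |iteratedDeriv m (fun s => poissonKernelHS n s x) t| ≤ C * (t + ‖x‖) ^ (-(n : ℝ) - m) := by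
  set a : ℝ := ((n : ℝ) + 1) / 2
  obtain ⟨C, hC, hbound⟩ := exists_abs_iteratedDeriv_rpow_kernel_le (a := a) (by positivity) m
  have hc : 0 < Real.Gamma a / Real.pi ^ a :=
    div_pos (Real.Gamma_pos_of_pos (by positivity)) (by positivity)
  refine ⟨Real.Gamma a / Real.pi ^ a * C, by positivity, fun x t ht => ?_⟩
  have hexp : 1 - 2 * a - m = -(n : ℝ) - m := by ring
  simp only [poissonKernelHS]
  rw [iteratedDeriv_const_mul_field, abs_mul, abs_of_pos hc, mul_assoc, ← hexp]
  exact mul_le_mul_of_nonneg_left (hbound ‖x‖ (norm_nonneg x) t ht) hc.le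

section BetaIntegral

variable {β δ A : ℝ}

lemma continuousOn_add_rpow_neg_mul_rpow (hA : 0 ≤ A) :
    ContinuousOn (fun s : ℝ => (A + s) ^ (-(β + δ)) * s ^ (β - 1)) (Ioi 0) :=
  ((continuousOn_const.add continuousOn_id).rpow_const fun s (hs : 0 < s) =>
    Or.inl (add_pos_of_nonneg_of_pos hA hs).ne').mul
    (continuousOn_id.rpow_const fun _ hs => Or.inl (ne_of_gt hs))

lemma add_rpow_neg_mul_rpow_le_left (hβ : 0 < β) (hδ : 0 < δ) (hA : 0 < A) {s : ℝ}
    (hs : 0 < s) : (A + s) ^ (-(β + δ)) * s ^ (β - 1) ≤ A ^ (-(β + δ)) * s ^ (β - 1) :=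
  mul_le_mul_of_nonneg_right (Real.rpow_le_rpow_of_nonpos hA (by linarith) (by linarith))
    (by positivity)

lemma add_rpow_neg_mul_rpow_le_right (hβ : 0 < β) (hδ : 0 < δ) (hA : 0 ≤ A) {s : ℝ}
    (hs : 0 < s) : (A + s) ^ (-(β + δ)) * s ^ (β - 1) ≤ s ^ (-δ - 1) := by
  calc (A + s) ^ (-(β + δ)) * s ^ (β - 1) ≤ s ^ (-(β + δ)) * s ^ (β - 1) :=
        mul_le_mul_of_nonneg_right
          (Real.rpow_le_rpow_of_nonpos hs (by linarith) (by linarith)) (by positivity)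
    _ = s ^ (-δ - 1) := by rw [← Real.rpow_add hs]; ring_nf

lemma integrableOn_Ioc_rpow_sub_one (hβ : 0 < β) (hA : 0 < A) :
    IntegrableOn (fun s : ℝ => s ^ (β - 1)) (Ioc 0 A) :=
  (integrableOn_Ioc_iff_integrableOn_Ioo).mpr
    ((intervalIntegral.integrableOn_Ioo_rpow_iff hA).mpr (by linarith))

lemma integrableOn_Ioc_add_rpow_neg_mul_rpow (hβ : 0 < β) (hδ : 0 < δ) (hA : 0 < A) :
    IntegrableOn (fun s : ℝ => (A + s) ^ (-(β + δ)) * s ^ (β - 1)) (Ioc 0 A) := by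
  refine ((integrableOn_Ioc_rpow_sub_one hβ hA).const_mul (A ^ (-(β + δ)))).mono'
    ((continuousOn_add_rpow_neg_mul_rpow hA.le).mono Ioc_subset_Ioi_self
      |>.aestronglyMeasurable measurableSet_Ioc) ?_
  filter_upwards [ae_restrict_mem measurableSet_Ioc] with s hs
  rw [Real.norm_of_nonneg (by have := hs.1; positivity)]
  exact add_rpow_neg_mul_rpow_le_left hβ hδ hA hs.1

lemma integrableOn_Ioi_add_rpow_neg_mul_rpow (hβ : 0 < β) (hδ : 0 < δ) (hA : 0 < A) :
    IntegrableOn (fun s : ℝ => (A + s) ^ (-(β + δ)) * s ^ (β - 1)) (Ioi A) := by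
  refine (integrableOn_Ioi_rpow_of_lt (a := -δ - 1) (by linarith) hA).mono'
    ((continuousOn_add_rpow_neg_mul_rpow hA.le).mono (fun s (hs : A < s) => hA.trans hs)
      |>.aestronglyMeasurable measurableSet_Ioi) ?_
  filter_upwards [ae_restrict_mem measurableSet_Ioi] with s (hs : A < s)
  rw [Real.norm_of_nonneg (by have := hA.trans hs; positivity)]
  exact add_rpow_neg_mul_rpow_le_right hβ hδ hA.le (hA.trans hs)

lemma integrableOn_add_rpow_neg_mul_rpow (hβ : 0 < β) (hδ : 0 < δ) (hA : 0 < A) :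
    IntegrableOn (fun s : ℝ => (A + s) ^ (-(β + δ)) * s ^ (β - 1)) (Ioi 0) := by
  rw [← Ioc_union_Ioi_eq_Ioi hA.le]
  exact (integrableOn_Ioc_add_rpow_neg_mul_rpow hβ hδ hA).union
    (integrableOn_Ioi_add_rpow_neg_mul_rpow hβ hδ hA)

/-- The left side is `A^(-δ) B(β, δ)`; splitting at `s = A` bounds the Beta function by
`1/β + 1/δ`. -/
lemma setIntegral_add_rpow_neg_mul_rpow_le (hβ : 0 < β) (hδ : 0 < δ) (hA : 0 < A) :
    ∫ s in Ioi 0, (A + s) ^ (-(β + δ)) * s ^ (β - 1) ≤ (1 / β + 1 / δ) * A ^ (-δ) := by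
  have hnear : ∫ s in Ioc 0 A, (A + s) ^ (-(β + δ)) * s ^ (β - 1) ≤ A ^ (-δ) / β := by
    calc ∫ s in Ioc 0 A, (A + s) ^ (-(β + δ)) * s ^ (β - 1)
        ≤ ∫ s in Ioc 0 A, A ^ (-(β + δ)) * s ^ (β - 1) :=
          setIntegral_mono_on (integrableOn_Ioc_add_rpow_neg_mul_rpow hβ hδ hA)
            ((integrableOn_Ioc_rpow_sub_one hβ hA).const_mul _) measurableSet_Ioc
            fun s hs => add_rpow_neg_mul_rpow_le_left hβ hδ hA hs.1
      _ = A ^ (-δ) / β := by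
          rw [integral_const_mul, ← intervalIntegral.integral_of_le hA.le,
            integral_rpow (Or.inl (by linarith)), sub_add_cancel, Real.zero_rpow hβ.ne',
            sub_zero, mul_div_assoc', ← Real.rpow_add hA]
          ring_nf
  have hfar : ∫ s in Ioi A, (A + s) ^ (-(β + δ)) * s ^ (β - 1) ≤ A ^ (-δ) / δ := by
    calc ∫ s in Ioi A, (A + s) ^ (-(β + δ)) * s ^ (β - 1) ≤ ∫ s in Ioi A, s ^ (-δ - 1) :=
          setIntegral_mono_on (integrableOn_Ioi_add_rpow_neg_mul_rpow hβ hδ hA)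
            (integrableOn_Ioi_rpow_of_lt (a := -δ - 1) (by linarith) hA) measurableSet_Ioi
            fun s hs => add_rpow_neg_mul_rpow_le_right hβ hδ hA.le (hA.trans hs)
      _ = A ^ (-δ) / δ := by
          rw [integral_Ioi_rpow_of_lt (by linarith) hA, sub_add_cancel, neg_div, div_neg,
            neg_neg]
  rw [← Ioc_union_Ioi_eq_Ioi hA.le, setIntegral_union Ioc_disjoint_Ioi_same measurableSet_Ioi
    (integrableOn_Ioc_add_rpow_neg_mul_rpow hβ hδ hA)
    (integrableOn_Ioi_add_rpow_neg_mul_rpow hβ hδ hA)]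
  linarith [show (1 / β + 1 / δ) * A ^ (-δ) = A ^ (-δ) / β + A ^ (-δ) / δ by ring]

end BetaIntegral

lemma lt_mOf (α : ℝ) : α < mOf α := by
  rw [mOf, Nat.cast_add_one]
  exact Nat.lt_floor_add_one α

lemma norm_fracKernel (n : ℕ) (α t : ℝ) (x : EuclideanSpace ℝ (Fin n)) :
    ‖fracKernel n α t x‖ =
      |∫ s in Ioi 0, iteratedDeriv (mOf α) (fun r => poissonKernelHS n r x) (t + s) *
        s ^ ((mOf α : ℝ) - α - 1)| / Real.Gamma (mOf α - α) := by
  rw [fracKernel, norm_mul, norm_div, Complex.norm_exp_ofReal_mul_I, Complex.norm_real,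
    Complex.norm_real, Real.norm_eq_abs, Real.norm_eq_abs,
    abs_of_pos (Real.Gamma_pos_of_pos (sub_pos.mpr (lt_mOf α)))]
  ring

end PoissonKernel

open PoissonKernel in
theorem stmt_15_general (n : ℕ) (γ : ℝ) (hγ : 0 < γ) :
    ∃ C : ℝ, 0 < C ∧ ∀ u : ℝ, 0 < u → ∀ x : EuclideanSpace ℝ (Fin n),
      ‖fracKernel n γ u x‖ ≤ C * (u + ‖x‖) ^ (-(n : ℝ) - γ) := by
  set m := mOf γ with hm
  obtain ⟨C, hC, hkernel⟩ := exists_abs_iteratedDeriv_poissonKernelHS_le n m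
  have hβ : 0 < (m : ℝ) - γ := sub_pos.mpr (lt_mOf γ)
  have hδ : 0 < (n : ℝ) + γ := by positivity
  have hΓ : 0 < Real.Gamma (m - γ) := Real.Gamma_pos_of_pos hβ
  refine ⟨C * (1 / (m - γ) + 1 / (n + γ)) / Real.Gamma (m - γ), by positivity,
    fun u hu x => ?_⟩
  have hA : 0 < u + ‖x‖ := by positivity
  have hintegrand : ∀ s ∈ Ioi (0 : ℝ),
      ‖iteratedDeriv m (fun r => poissonKernelHS n r x) (u + s) * s ^ ((m : ℝ) - γ - 1)‖ ≤
        C * ((u + ‖x‖ + s) ^ (-((m - γ) + (n + γ))) * s ^ ((m : ℝ) - γ - 1)) := by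
    intro s (hs : 0 < s)
    rw [Real.norm_eq_abs, abs_mul, abs_of_nonneg (Real.rpow_nonneg hs.le _), ← mul_assoc,
      show -((m - γ) + (n + γ)) = -(n : ℝ) - m by ring, add_right_comm]
    exact mul_le_mul_of_nonneg_right (hkernel x (u + s) (by positivity)) (by positivity)
  rw [norm_fracKernel, ← hm, show -(n : ℝ) - γ = -(n + γ) by ring, div_mul_eq_mul_div]
  gcongr
  calc |∫ s in Ioi 0, iteratedDeriv m (fun r => poissonKernelHS n r x) (u + s) *
          s ^ ((m : ℝ) - γ - 1)|
      ≤ ∫ s in Ioi 0, C * ((u + ‖x‖ + s) ^ (-((m - γ) + (n + γ))) * s ^ ((m : ℝ) - γ - 1)) :=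
        norm_integral_le_of_norm_le ((integrableOn_add_rpow_neg_mul_rpow hβ hδ hA).const_mul C)
          ((ae_restrict_iff' measurableSet_Ioi).mpr (Eventually.of_forall hintegrand))
    _ ≤ C * (1 / (m - γ) + 1 / (n + γ)) * (u + ‖x‖) ^ (-(n + γ)) := by
        rw [integral_const_mul, mul_assoc]
        exact mul_le_mul_of_nonneg_left (setIntegral_add_rpow_neg_mul_rpow_le hβ hδ hA) hC.le

/-- For every `γ > 0` there is `C = C(n,γ) > 0` such that for all `u > 0`
and all `x ∈ ℝⁿ`, `|∂_u^γ p_u(x)| ≤ C (u + |x|)^{−n−γ}`. -/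
theorem stmt_15 (n : ℕ) (hn : 1 ≤ n) (γ : ℝ) (hγ : 0 < γ) :
    ∃ C : ℝ, 0 < C ∧ ∀ u : ℝ, 0 < u → ∀ x : EuclideanSpace ℝ (Fin n),
      ‖fracKernel n γ u x‖ ≤ C * (u + ‖x‖) ^ (-(n : ℝ) - γ) :=
  stmt_15_general n γ hγ
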